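/- For s > 0 and σ > 0, the scale mixture identity ∫₀^∞ (2πtσ²)^{-1/2} exp(−x²/(2tσ²)) · (t^{s−1}e^{−t}/Γ(s)) dt = (2/((2π)^{1/2}Γ(s)σ)) · (|x|/(σ√2))^{s−1/2} K_{s−1/2}(√2|x|/σ) holds for all x ≠ 0. -/

import Mathlib

/-!
After the substitution `a = |x| / (σ √2)` the mixed density is a constant times
`∫₀^∞ t^(ν-1) exp(-t - a²/t) dt` with `ν = s - 1/2`. The involution `t ↦ a²/t` of `(0, ∞)` turns
this into `a^(2ν) ∫₀^∞ t^(-ν-1) exp(-t - a²/t) dt`, which is `2 a^ν K_ν(2a)` by the integral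
representation of `K_ν`.
-/

/-- The modified Bessel function of the second kind `K_ν`, via its integral
representation `K_ν(x) = (1/2)(x/2)^ν ∫₀^∞ t^(−ν−1) exp(−t − x²/(4t)) dt`. -/
noncomputable def besselK (ν x : ℝ) : ℝ :=
  (1/2) * (x/2) ^ ν * ∫ t in Set.Ioi (0:ℝ), t ^ (-ν - 1) * Real.exp (-t - x^2 / (4*t))

open MeasureTheory Real Set

theorem integral_comp_const_div_Ioi {E : Type*} [NormedAddCommGroup E] [NormedSpace ℝ E]
    (g : ℝ → E) {c : ℝ} (hc : 0 < c) :
    ∫ t in Ioi 0, (c / t ^ 2) • g (c / t) = ∫ t in Ioi 0, g t := by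
  have hinvol : ∀ t : ℝ, c / (c / t) = t := fun t => div_div_cancel₀ hc.ne'
  have himage : (c / ·) '' Ioi (0 : ℝ) = Ioi 0 := by
    ext y
    constructor
    · rintro ⟨t, ht, rfl⟩
      exact div_pos hc ht
    · exact fun hy => ⟨c / y, div_pos hc hy, hinvol y⟩
  have hderiv : ∀ t ∈ Ioi (0 : ℝ), HasDerivWithinAt (c / ·) (-(c / t ^ 2)) (Ioi 0) t := by
    intro t ht
    simpa [div_eq_mul_inv] using ((hasDerivAt_inv (ne_of_gt ht)).const_mul c).hasDerivWithinAt
  have hinj : InjOn (c / ·) (Ioi (0 : ℝ)) := fun t₁ _ t₂ _ h => by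
    rw [← hinvol t₁, ← hinvol t₂]
    exact congrArg (c / ·) h
  conv_rhs =>
    rw [← himage, integral_image_eq_integral_abs_deriv_smul measurableSet_Ioi hderiv hinj]
  refine setIntegral_congr_fun measurableSet_Ioi fun t _ => ?_
  rw [abs_neg, abs_of_nonneg (by positivity)]

theorem integral_rpow_mul_exp_neg_sub_sq_div (ν : ℝ) {a : ℝ} (ha : 0 < a) :
    ∫ t in Ioi 0, t ^ (ν - 1) * exp (-t - a ^ 2 / t) = 2 * a ^ ν * besselK ν (2 * a) := by
  have hkernel : ∀ t ∈ Ioi (0 : ℝ),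
      (a ^ 2 / t ^ 2) • ((a ^ 2 / t) ^ (ν - 1) * exp (-(a ^ 2 / t) - a ^ 2 / (a ^ 2 / t)))
        = (a ^ ν * a ^ ν) * (t ^ (-ν - 1) * exp (-t - (2 * a) ^ 2 / (4 * t))) := by
    intro t (ht : 0 < t)
    have hpow : (a ^ 2 / t) ^ (ν - 1) * (a ^ 2 / t ^ 2) = (a ^ ν * a ^ ν) * t ^ (-ν - 1) := by
      rw [div_rpow (by positivity) ht.le, rpow_sub_one (by positivity),
        ← rpow_pow_comm ha.le ν 2, show -ν - 1 = -(ν + 1) by ring, rpow_neg ht.le,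
        rpow_add_one ht.ne', rpow_sub_one ht.ne']
      field_simp
    have hexp : -(a ^ 2 / t) - a ^ 2 / (a ^ 2 / t) = -t - (2 * a) ^ 2 / (4 * t) := by
      field_simp
      ring
    rw [smul_eq_mul, hexp]
    linear_combination exp (-t - (2 * a) ^ 2 / (4 * t)) * hpow
  rw [← integral_comp_const_div_Ioi _ (pow_pos ha 2),
    setIntegral_congr_fun measurableSet_Ioi hkernel, integral_const_mul, besselK,
    mul_div_cancel_left₀ a two_ne_zero]
  ring

theorem gaussian_mul_gamma_density_eq (s σ x : ℝ) {t : ℝ} (hσ : 0 < σ) (ht : 0 < t) :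
    (2 * π * t * σ ^ 2) ^ (-(1/2) : ℝ) * exp (-x ^ 2 / (2 * t * σ ^ 2))
        * (t ^ (s - 1) * exp (-t) / Gamma s)
      = ((2 * π) ^ ((1:ℝ)/2) * Gamma s * σ)⁻¹
        * (t ^ (s - 1/2 - 1) * exp (-t - (|x| / (σ * √2)) ^ 2 / t)) := by
  have hscale : (2 * π * t * σ ^ 2) ^ (-(1/2) : ℝ) * t ^ (s - 1)
      = ((2 * π) ^ ((1:ℝ)/2) * σ)⁻¹ * t ^ (s - 1/2 - 1) := by
    rw [show 2 * π * t * σ ^ 2 = (2 * π * σ ^ 2) * t by ring, mul_rpow (by positivity) ht.le,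
      mul_assoc, ← rpow_add ht, rpow_neg (by positivity), mul_rpow (by positivity) (by positivity),
      ← sqrt_eq_rpow, ← sqrt_eq_rpow, sqrt_sq hσ.le]
    ring_nf
  have hexp : exp (-x ^ 2 / (2 * t * σ ^ 2)) * exp (-t) = exp (-t - (|x| / (σ * √2)) ^ 2 / t) := by
    rw [← exp_add, div_pow, mul_pow, sq_sqrt zero_le_two, sq_abs]
    congr 1
    field_simp
    ring
  calc _ = (2 * π * t * σ ^ 2) ^ (-(1/2) : ℝ) * t ^ (s - 1)
        * (exp (-x ^ 2 / (2 * t * σ ^ 2)) * exp (-t)) / Gamma s := by ring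
    _ = _ := by rw [hscale, hexp]; ring

theorem stmt18_general (s σ : ℝ) (hσ : 0 < σ) (x : ℝ) (hx : x ≠ 0) :
    (∫ t in Set.Ioi (0:ℝ),
        (2 * Real.pi * t * σ^2) ^ (-(1/2) : ℝ) * Real.exp (-x^2 / (2 * t * σ^2))
          * (t ^ (s - 1) * Real.exp (-t) / Real.Gamma s))
      = 2 / ((2 * Real.pi) ^ ((1:ℝ)/2) * Real.Gamma s * σ)
          * (|x| / (σ * Real.sqrt 2)) ^ (s - 1/2)
          * besselK (s - 1/2) (Real.sqrt 2 * |x| / σ) := by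
  have ha : 0 < |x| / (σ * √2) := by positivity
  have htwice : 2 * (|x| / (σ * √2)) = √2 * |x| / σ := by
    field_simp
    rw [sq_sqrt zero_le_two]
  rw [setIntegral_congr_fun measurableSet_Ioi fun _ ht => gaussian_mul_gamma_density_eq s σ x hσ ht,
    integral_const_mul, integral_rpow_mul_exp_neg_sub_sq_div _ ha, htwice]
  ring

/-- One-dimensional Gauss–Laplace transmutation at the level of densities:
mixing a centered Gaussian density of variance `t σ²` against a `Gamma(s,1)`
density in `t` yields the `GAL_1(σ², 0, s)` density. -/
theorem stmt18 (s σ : ℝ) (hs : 0 < s) (hσ : 0 < σ) (x : ℝ) (hx : x ≠ 0) :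
    (∫ t in Set.Ioi (0:ℝ),
        (2 * Real.pi * t * σ^2) ^ (-(1/2) : ℝ) * Real.exp (-x^2 / (2 * t * σ^2))
          * (t ^ (s - 1) * Real.exp (-t) / Real.Gamma s))
      = 2 / ((2 * Real.pi) ^ ((1:ℝ)/2) * Real.Gamma s * σ)
          * (|x| / (σ * Real.sqrt 2)) ^ (s - 1/2)
          * besselK (s - 1/2) (Real.sqrt 2 * |x| / σ) :=
  stmt18_general s σ hσ x hx
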